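/- Let G be a strongly connected signed digraph with mirror Laplacian L̂ = (W·L + Lᵀ·W)/2. Then the signed network ẋ = −L̂·x achieves signed-average consensus if and only if G is structurally balanced; precisely: G is structurally balanced if and only if there exists a gauge transformation D with every entry of D·A·D nonnegative such that for every initial state x₀ ∈ ℝⁿ, the solution x(t) = exp(−t·L̂)·x₀ satisfies lim_{t→∞} x(t) = ((1_nᵀ·D·x₀)/n)·D·1_n, where 1_n is the all-ones vector in ℝⁿ. -/

import Mathlib

open Matrix BigOperators Filter

/-- In-degree of node `i`: sum of absolute values of the `i`-th row of `A`. -/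
noncomputable def inDeg {n : ℕ} (A : Matrix (Fin n) (Fin n) ℝ) (i : Fin n) : ℝ := ∑ j, |A i j|

/-- Laplacian `L = Δ − A` of the signed digraph with adjacency matrix `A`. -/
noncomputable def lapOf {n : ℕ} (A : Matrix (Fin n) (Fin n) ℝ) : Matrix (Fin n) (Fin n) ℝ :=
  Matrix.diagonal (inDeg A) - A

/-- Laplacian `L̄ = Δ − Ā` of the induced unsigned digraph. -/
noncomputable def lapBar {n : ℕ} (A : Matrix (Fin n) (Fin n) ℝ) : Matrix (Fin n) (Fin n) ℝ :=
  Matrix.diagonal (inDeg A) - Matrix.of (fun i j => |A i j|)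

/-- `det(L̄_ii)`: determinant of `L̄` with its `i`-th row and column removed. -/
noncomputable def minorDet {n : ℕ} (A : Matrix (Fin n) (Fin n) ℝ) (i : Fin n) : ℝ :=
  Matrix.det ((lapBar A).submatrix (fun k : {j : Fin n // j ≠ i} => (k : Fin n))
    (fun k : {j : Fin n // j ≠ i} => (k : Fin n)))

/-- `W = diag(det(L̄_11), …, det(L̄_nn))`. -/
noncomputable def Wmat {n : ℕ} (A : Matrix (Fin n) (Fin n) ℝ) : Matrix (Fin n) (Fin n) ℝ :=
  Matrix.diagonal (minorDet A)

/-- Mirror adjacency matrix `Â = (W·A + Aᵀ·W)/2`. -/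
noncomputable def mirrorAdj {n : ℕ} (A : Matrix (Fin n) (Fin n) ℝ) : Matrix (Fin n) (Fin n) ℝ :=
  (1/2 : ℝ) • (Wmat A * A + Aᵀ * Wmat A)

/-- Mirror Laplacian `L̂ = (W·L + Lᵀ·W)/2`. -/
noncomputable def mirrorLap {n : ℕ} (A : Matrix (Fin n) (Fin n) ℝ) : Matrix (Fin n) (Fin n) ℝ :=
  (1/2 : ℝ) • (Wmat A * lapOf A + (lapOf A)ᵀ * Wmat A)

/-- `(j, i)` is a directed edge when `a_ij ≠ 0`; strong connectivity: a directed
path between every ordered pair of distinct nodes. -/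
def StronglyConnected {n : ℕ} (A : Matrix (Fin n) (Fin n) ℝ) : Prop :=
  ∀ i j : Fin n, i ≠ j → Relation.TransGen (fun u v => A v u ≠ 0) i j

/-- `σ` is the diagonal of a gauge transformation: each entry is `±1`. -/
def IsGauge {n : ℕ} (σ : Fin n → ℝ) : Prop := ∀ i, σ i = 1 ∨ σ i = -1

/-- Structural balance: there is a gauge transformation `D = diag σ` with all entries
of `D·A·D` (entrywise `σ i * A i j * σ j`) nonnegative. -/
def StructBalanced {n : ℕ} (A : Matrix (Fin n) (Fin n) ℝ) : Prop :=
  ∃ σ : Fin n → ℝ, IsGauge σ ∧ ∀ i j, 0 ≤ σ i * A i j * σ j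

/-- Improved Laplacian potential function
`Φ_e(x) = Σ_i Σ_j det(L̄_ii)·|a_ij|·(x_i − sgn(a_ij)·x_j)²`. -/
noncomputable def PhiE {n : ℕ} (A : Matrix (Fin n) (Fin n) ℝ) (x : Fin n → ℝ) : ℝ :=
  ∑ i, ∑ j, minorDet A i * |A i j| * (x i - Real.sign (A i j) * x j) ^ 2

/-
The weights `det L̄_ii` are positive (principal submatrices of `L̄` are diagonally dominant with
trivial kernel, by the maximum principle on a strongly connected graph) and form a left null
vector of `L̄`, because `ker L̄` is spanned by `1` and hence the columns of `adj L̄` are constant.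
This balance identity makes `xᵀ L̂ x` equal to half the potential
`Φ_e(x) = Σ det(L̄_ii) |a_ij| (x_i - sgn(a_ij) x_j)²`, so `L̂` is positive semidefinite, and for a
gauge `σ` making `G` nonnegative its kernel is the line through `σ`. The heat flow
`exp (-t L̂) x₀` converges to the orthogonal projection of `x₀` onto `ker L̂`, which is the
signed average `((σ ⬝ x₀) / n) σ`.
-/

open Finset Topology

lemma tendsto_exp_neg_mul_atTop {c : ℝ} (hc : 0 ≤ c) :
    Tendsto (fun t : ℝ => Real.exp (-(t * c))) atTop (𝓝 (if c = 0 then 1 else 0)) := by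
  split_ifs with h
  · simp [h]
  · exact Real.tendsto_exp_atBot.comp <| tendsto_neg_atTop_atBot.comp <|
      tendsto_id.atTop_mul_const (lt_of_le_of_ne hc (Ne.symm h))

namespace Matrix

variable {ι : Type*} [Fintype ι] [DecidableEq ι]

theorem det_pos_of_sum_row_lt_diag {M : Matrix ι ι ℝ}
    (h : ∀ k, ∑ j ∈ univ.erase k, |M k j| < M k k) : 0 < M.det := by
  set D : Matrix ι ι ℝ := diagonal fun k => M k k
  set N : ℝ → Matrix ι ι ℝ := fun s => D + s • (M - D)
  have hN : ∀ s k j, N s k j = if k = j then M k k else s * M k j := by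
    intro s k j
    by_cases hkj : k = j <;> simp [N, D, hkj]
  have hne : ∀ s ∈ Set.Icc (0 : ℝ) 1, (N s).det ≠ 0 := by
    rintro s ⟨hs0, hs1⟩
    refine det_ne_zero_of_sum_row_lt_diag fun k => ?_
    calc ∑ j ∈ univ.erase k, ‖N s k j‖ ≤ ∑ j ∈ univ.erase k, |M k j| := by
          refine Finset.sum_le_sum fun j hj => ?_
          rw [hN, if_neg (Finset.ne_of_mem_erase hj).symm, Real.norm_eq_abs, abs_mul,
            abs_of_nonneg hs0]
          exact mul_le_of_le_one_left (abs_nonneg _) hs1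
      _ < M k k := h k
      _ ≤ ‖N s k k‖ := by rw [hN, if_pos rfl]; exact le_abs_self _
  have hcont : Continuous fun s => (N s).det :=
    (continuous_const.add (continuous_id.smul continuous_const)).matrix_det
  have h0 : 0 < (N 0).det := by
    simp only [N, zero_smul, add_zero, D, det_diagonal]
    exact Finset.prod_pos fun k _ => (Finset.sum_nonneg fun _ _ => abs_nonneg _).trans_lt (h k)
  by_contra! h1
  have : (N 1).det = M.det := by simp [N]
  obtain ⟨s, hs, hs0⟩ := intermediate_value_Icc' zero_le_one hcont.continuousOn
    ⟨this ▸ h1, h0.le⟩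
  exact hne s hs hs0

theorem det_nonneg_of_sum_row_le_diag {M : Matrix ι ι ℝ}
    (h : ∀ k, ∑ j ∈ univ.erase k, |M k j| ≤ M k k) : 0 ≤ M.det := by
  have hpos : ∀ ε : ℝ, 0 < ε → 0 < (M + ε • (1 : Matrix ι ι ℝ)).det := fun ε hε =>
    det_pos_of_sum_row_lt_diag fun k => by
      calc ∑ j ∈ univ.erase k, |(M + ε • (1 : Matrix ι ι ℝ)) k j| = ∑ j ∈ univ.erase k, |M k j| :=
            Finset.sum_congr rfl fun j hj => by
              simp [one_apply_ne (Finset.ne_of_mem_erase hj).symm]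
        _ < (M + ε • (1 : Matrix ι ι ℝ)) k k := by
            simpa using (h k).trans_lt (lt_add_of_pos_right _ hε)
  have hcont : Continuous fun ε : ℝ => (M + ε • (1 : Matrix ι ι ℝ)).det :=
    (continuous_const.add (continuous_id.smul continuous_const)).matrix_det
  simpa using ge_of_tendsto ((hcont.tendsto 0).mono_left (nhdsWithin_le_nhds (s := Set.Ioi 0)))
    (eventually_nhdsWithin_of_forall fun ε hε => (hpos ε hε).le)

theorem sum_row_le_diag_submatrix {κ : Type*} [Fintype κ] [DecidableEq κ] {M : Matrix ι ι ℝ}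
    (h : ∀ k, ∑ j ∈ univ.erase k, |M k j| ≤ M k k) {e : κ → ι} (he : Function.Injective e)
    (k : κ) : ∑ j ∈ univ.erase k, |M.submatrix e e k j| ≤ M.submatrix e e k k := by
  calc ∑ j ∈ univ.erase k, |M (e k) (e j)| = ∑ j ∈ (univ.erase k).map ⟨e, he⟩, |M (e k) j| := by
        rw [Finset.sum_map]; rfl
    _ ≤ ∑ j ∈ univ.erase (e k), |M (e k) j| := by
        refine Finset.sum_le_sum_of_subset_of_nonneg ?_ fun _ _ _ => abs_nonneg _
        intro j hj
        obtain ⟨l, hl, rfl⟩ := Finset.mem_map.mp hj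
        exact Finset.mem_erase.mpr ⟨he.ne (Finset.ne_of_mem_erase hl), Finset.mem_univ _⟩
    _ ≤ M (e k) (e k) := h (e k)

theorem mulVec_eq_of_eq_mul_diagonal_mul {S U V : Matrix ι ι ℝ} {d : ι → ℝ}
    (hS : S = U * diagonal d * V) (v : ι → ℝ) :
    S *ᵥ v = U *ᵥ fun k => d k * (V *ᵥ v) k := by
  rw [hS, ← mulVec_mulVec, ← mulVec_mulVec]
  congr 1
  funext k
  exact mulVec_diagonal _ _ _

theorem exp_neg_smul_mulVec_eq_of_eq_conj {S U : Matrix ι ι ℝ} {d : ι → ℝ}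
    (hU : IsUnit U) (hS : S = U * diagonal d * U⁻¹) (t : ℝ) (v : ι → ℝ) :
    NormedSpace.exp (-(t • S)) *ᵥ v = U *ᵥ fun k => Real.exp (-(t * d k)) * (U⁻¹ *ᵥ v) k := by
  have hconj : -(t • S) = U * diagonal (fun k => -(t * d k)) * U⁻¹ := by
    rw [hS, show diagonal (fun k => -(t * d k)) = -(t • diagonal d) by
      rw [← diagonal_smul, ← diagonal_neg]; rfl]
    simp only [Matrix.mul_neg, Matrix.neg_mul, Matrix.mul_smul, Matrix.smul_mul]
  rw [hconj, Matrix.exp_conj _ _ hU, exp_diagonal, mulVec_eq_of_eq_mul_diagonal_mul rfl]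
  simp [Real.exp_eq_exp_ℝ]

theorem IsHermitian.eq_eigenvectorUnitary_mul_diagonal_mul_transpose {S : Matrix ι ι ℝ}
    (hS : S.IsHermitian) :
    S = (hS.eigenvectorUnitary : Matrix ι ι ℝ) * diagonal hS.eigenvalues *
      (hS.eigenvectorUnitary : Matrix ι ι ℝ)ᵀ := by
  conv_lhs => rw [hS.spectral_theorem]
  simp [RCLike.ofReal_real_eq_id, star_eq_conjTranspose, conjTranspose_eq_transpose_of_trivial]

/-- The heat flow `exp (-t S) y` of a positive semidefinite `S` converges to the orthogonal
projection of `y` onto `ker S`. -/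
theorem PosSemidef.tendsto_exp_neg_smul_mulVec {S : Matrix ι ι ℝ} (hS : S.PosSemidef)
    (y : ι → ℝ) :
    ∃ p, S *ᵥ p = 0 ∧ (∀ v, S *ᵥ v = 0 → v ⬝ᵥ p = v ⬝ᵥ y) ∧
      Tendsto (fun t : ℝ => NormedSpace.exp (-(t • S)) *ᵥ y) atTop (𝓝 p) := by
  set U : Matrix ι ι ℝ := ↑hS.isHermitian.eigenvectorUnitary
  set d := hS.isHermitian.eigenvalues
  have hUU : U * Uᵀ = 1 := by
    simpa [star_eq_conjTranspose, conjTranspose_eq_transpose_of_trivial] using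
      Unitary.coe_mul_star_self hS.isHermitian.eigenvectorUnitary
  have hUU' : Uᵀ * U = 1 := mul_eq_one_comm.mp hUU
  have hSd : S = U * diagonal d * Uᵀ :=
    hS.isHermitian.eq_eigenvectorUnitary_mul_diagonal_mul_transpose
  have hUinv : U⁻¹ = Uᵀ := inv_eq_right_inv hUU
  set E : ι → ℝ := fun k => if d k = 0 then 1 else 0
  have hker : ∀ v, S *ᵥ v = 0 → ∀ k, E k * (Uᵀ *ᵥ v) k = (Uᵀ *ᵥ v) k := by
    intro v hv k
    have : d k * (Uᵀ *ᵥ v) k = 0 := by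
      have := congrArg (Uᵀ *ᵥ ·) (mulVec_eq_of_eq_mul_diagonal_mul hSd v)
      simp only [mulVec_mulVec, hUU', one_mulVec, hv, mulVec_zero] at this
      exact (congrFun this k).symm
    by_cases h : d k = 0 <;> simp_all [E]
  refine ⟨U *ᵥ fun k => E k * (Uᵀ *ᵥ y) k, ?_, fun v hv => ?_, ?_⟩
  · rw [mulVec_eq_of_eq_mul_diagonal_mul hSd, mulVec_mulVec, hUU', one_mulVec]
    convert mulVec_zero U using 2
    funext k
    by_cases h : d k = 0 <;> simp [E, h]
  · calc v ⬝ᵥ (U *ᵥ fun k => E k * (Uᵀ *ᵥ y) k)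
        = ∑ k, E k * (Uᵀ *ᵥ v) k * (Uᵀ *ᵥ y) k := by
          rw [dotProduct_mulVec, ← mulVec_transpose, dotProduct]
          exact Finset.sum_congr rfl fun k _ => by ring
      _ = (Uᵀ *ᵥ v) ⬝ᵥ (Uᵀ *ᵥ y) := Finset.sum_congr rfl fun k _ => by rw [hker v hv k]
      _ = v ⬝ᵥ y := by
          rw [dotProduct_mulVec, ← mulVec_transpose, transpose_transpose, mulVec_mulVec, hUU,
            one_mulVec]
  · have hSU : S = U * diagonal d * U⁻¹ := hUinv ▸ hSd
    simp_rw [exp_neg_smul_mulVec_eq_of_eq_conj (IsUnit.of_mul_eq_one _ hUU) hSU, hUinv]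
    refine ((mulVecLin U).continuous_of_finiteDimensional.tendsto _).comp ?_
    exact tendsto_pi_nhds.mpr fun k =>
      (tendsto_exp_neg_mul_atTop (hS.eigenvalues_nonneg k)).mul_const _
theorem adjugate_apply_self_eq_det_submatrix {R : Type*} [CommRing R] {m : ℕ}
    (M : Matrix (Fin (m + 1)) (Fin (m + 1)) R) (i : Fin (m + 1)) :
    M.adjugate i i = (M.submatrix (Subtype.val : {j // j ≠ i} → _) Subtype.val).det := by
  rw [adjugate_fin_succ_eq_det_submatrix, ← det_submatrix_equiv_self (finSuccAboveEquiv i)]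
  simp [finSuccAboveEquiv_apply, Function.comp_def]

end Matrix

section Laplacian

variable {n : ℕ} {A : Matrix (Fin n) (Fin n) ℝ}

theorem StronglyConnected.forall_of_closed (hsc : StronglyConnected A) {P : Fin n → Prop}
    (hP : ∀ j l, A j l ≠ 0 → P j → P l) {k : Fin n} (hk : P k) (i : Fin n) : P i := by
  rcases eq_or_ne i k with rfl | hik
  · exact hk
  · exact Relation.TransGen.head_induction_on (hsc i k hik) (fun hu => hP _ _ hu hk)
      fun hu _ hc => hP _ _ hu hc

lemma lapBar_mulVec_apply (x : Fin n → ℝ) (k : Fin n) :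
    (lapBar A *ᵥ x) k = inDeg A k * x k - ∑ j, |A k j| * x j := by
  rw [lapBar, sub_mulVec, Pi.sub_apply, mulVec_diagonal]
  rfl

lemma lapBar_mulVec_one : lapBar A *ᵥ (fun _ => 1) = 0 := by
  funext k
  rw [lapBar_mulVec_apply]
  simp [inDeg]

lemma sum_row_le_diag_lapBar (k : Fin n) :
    ∑ j ∈ univ.erase k, |lapBar A k j| ≤ lapBar A k k := by
  have hoff : ∀ j ∈ univ.erase k, |lapBar A k j| = |A k j| := fun j hj => by
    simp [lapBar, diagonal_apply_ne _ (Finset.ne_of_mem_erase hj).symm]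
  rw [Finset.sum_congr rfl hoff, show lapBar A k k = inDeg A k - |A k k| by simp [lapBar], inDeg,
    ← Finset.add_sum_erase _ _ (mem_univ k), add_sub_cancel_left]

/-- Maximum principle: `(L̄ x) j = 0` makes `inDeg A j * x j` a combination of the values at the
in-neighbours of `j` with total weight `inDeg A j`. -/
lemma abs_eq_of_lapBar_mulVec_apply_eq_zero {x : Fin n → ℝ} {j l : Fin n}
    (hmax : ∀ l, |x l| ≤ |x j|) (hj : (lapBar A *ᵥ x) j = 0) (hjl : A j l ≠ 0) :
    |x l| = |x j| := by
  have hle : ∀ l ∈ univ, |A j l| * |x l| ≤ |A j l| * |x j| :=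
    fun l _ => mul_le_mul_of_nonneg_left (hmax l) (abs_nonneg _)
  have hsum : ∑ l, |A j l| * |x l| = ∑ l, |A j l| * |x j| := by
    refine le_antisymm (Finset.sum_le_sum hle) ?_
    rw [lapBar_mulVec_apply, sub_eq_zero] at hj
    calc ∑ l, |A j l| * |x j| = |inDeg A j * x j| := by
          rw [← Finset.sum_mul, abs_mul, inDeg,
            abs_of_nonneg (Finset.sum_nonneg fun l _ => abs_nonneg (A j l))]
      _ = |∑ l, |A j l| * x l| := by rw [hj]
      _ ≤ ∑ l, |A j l| * |x l| := by
          simpa only [abs_mul, abs_abs] using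
            Finset.abs_sum_le_sum_abs (fun l => |A j l| * x l) univ
  exact mul_left_cancel₀ (abs_ne_zero.mpr hjl)
    ((Finset.sum_eq_sum_iff_of_le hle).mp hsum l (mem_univ l))

theorem StronglyConnected.eq_zero_of_lapBar_mulVec (hsc : StronglyConnected A) {i : Fin n}
    {x : Fin n → ℝ} (hi : x i = 0) (hx : ∀ k ≠ i, (lapBar A *ᵥ x) k = 0) : x = 0 := by
  obtain ⟨k, -, hk⟩ := Finset.exists_max_image univ (fun j => |x j|) ⟨i, mem_univ i⟩
  have hmax : ∀ l, |x l| ≤ |x k| := fun l => hk l (mem_univ l)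
  suffices |x k| = 0 from funext fun l => abs_nonpos_iff.mp (this ▸ hmax l)
  by_contra hpos
  have hall : ∀ l, |x l| = |x k| := hsc.forall_of_closed (P := fun l => |x l| = |x k|)
    (fun j l hjl hj => by
      have hji : j ≠ i := fun h => hpos (by rw [← hj, h, hi, abs_zero])
      rw [← hj] at hmax ⊢
      exact abs_eq_of_lapBar_mulVec_apply_eq_zero hmax (hx j hji) hjl) rfl
  exact hpos (by rw [← hall i, hi, abs_zero])

theorem StronglyConnected.apply_eq_of_lapBar_mulVec_eq_zero (hsc : StronglyConnected A)
    {x : Fin n → ℝ} (hx : lapBar A *ᵥ x = 0) (k l : Fin n) : x k = x l := by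
  have hconst : lapBar A *ᵥ (fun _ => x l) = 0 := by
    rw [show (fun _ => x l) = x l • fun _ : Fin n => (1 : ℝ) by ext; simp, mulVec_smul,
      lapBar_mulVec_one, smul_zero]
  have h := hsc.eq_zero_of_lapBar_mulVec (i := l) (x := x - fun _ => x l) (by simp)
    fun j _ => by rw [mulVec_sub, hx, hconst, sub_zero, Pi.zero_apply]
  simpa [sub_eq_zero] using congrFun h k

theorem StronglyConnected.minorDet_pos (hsc : StronglyConnected A) (i : Fin n) :
    0 < minorDet A i := by
  refine lt_of_le_of_ne (det_nonneg_of_sum_row_le_diag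
    (sum_row_le_diag_submatrix sum_row_le_diag_lapBar Subtype.val_injective)) (Ne.symm ?_)
  intro hdet
  obtain ⟨v, hv0, hv⟩ := exists_mulVec_eq_zero_iff.mpr hdet
  set x : Fin n → ℝ := fun j => if h : j = i then 0 else v ⟨j, h⟩
  have hx : ∀ k ≠ i, (lapBar A *ᵥ x) k = 0 := fun k hk => by
    have hvk := congrFun hv ⟨k, hk⟩
    rw [Pi.zero_apply] at hvk
    rw [mulVec, dotProduct, Fintype.sum_eq_add_sum_subtype_ne _ i, ← hvk]
    simp only [x, dif_pos rfl, mul_zero, zero_add]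
    exact Finset.sum_congr rfl fun j _ => by rw [dif_neg j.2]; rfl
  refine hv0 (funext fun j => ?_)
  simpa [x, j.2] using congrFun (hsc.eq_zero_of_lapBar_mulVec (by simp [x]) hx) j

theorem StronglyConnected.minorDet_vecMul_lapBar_eq_zero (hsc : StronglyConnected A) :
    minorDet A ᵥ* lapBar A = 0 := by
  cases n with
  | zero => exact Subsingleton.elim _ _
  | succ m =>
    set L := lapBar A
    have hdet : L.det = 0 := exists_mulVec_eq_zero_iff.mp
      ⟨_, fun h => one_ne_zero (congrFun h 0), lapBar_mulVec_one⟩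
    -- the columns of `adj L` lie in `ker L`, so they are constant
    have hcol : ∀ k j, L.adjugate k j = L.adjugate j j := fun k j =>
      hsc.apply_eq_of_lapBar_mulVec_eq_zero (x := fun l => L.adjugate l j) (funext fun l => by
        simpa [hdet, mul_apply, mulVec, dotProduct] using
          congrFun (congrFun (mul_adjugate L) l) j) k j
    funext j
    have hrow := congrFun (congrFun (adjugate_mul L) j) j
    rw [hdet, zero_smul, Matrix.zero_apply, mul_apply] at hrow
    rw [vecMul, dotProduct, Pi.zero_apply, ← hrow]
    refine Finset.sum_congr rfl fun k _ => ?_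
    rw [hcol j k, adjugate_apply_self_eq_det_submatrix]
    rfl

theorem StronglyConnected.sum_minorDet_mul_abs (hsc : StronglyConnected A) (j : Fin n) :
    ∑ k, minorDet A k * |A k j| = minorDet A j * inDeg A j := by
  have h := congrFun hsc.minorDet_vecMul_lapBar_eq_zero j
  simp only [lapBar, vecMul_sub, Pi.sub_apply, vecMul_diagonal, Pi.zero_apply, sub_eq_zero] at h
  exact h.symm

lemma lapOf_mulVec_apply (x : Fin n → ℝ) (k : Fin n) :
    (lapOf A *ᵥ x) k = inDeg A k * x k - ∑ j, A k j * x j := by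
  rw [lapOf, sub_mulVec, Pi.sub_apply, mulVec_diagonal]
  rfl

lemma dotProduct_mirrorLap_mulVec (x : Fin n → ℝ) :
    x ⬝ᵥ (mirrorLap A *ᵥ x) = ∑ k, minorDet A k * x k * (lapOf A *ᵥ x) k := by
  simp only [mirrorLap, Wmat, smul_mulVec, add_mulVec, ← mulVec_mulVec, dotProduct_smul,
    dotProduct_add, dotProduct_mulVec x (lapOf A)ᵀ, vecMul_transpose]
  simp only [dotProduct, mulVec_diagonal, smul_eq_mul, ← Finset.sum_add_distrib, Finset.mul_sum]
  exact Finset.sum_congr rfl fun k _ => by ring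

lemma abs_mul_sub_sign_mul_sq (a u v : ℝ) :
    |a| * (u - Real.sign a * v) ^ 2 = |a| * u ^ 2 - 2 * (a * u * v) + |a| * v ^ 2 := by
  rcases lt_trichotomy a 0 with ha | rfl | ha
  · rw [Real.sign_of_neg ha, abs_of_neg ha]; ring
  · simp
  · rw [Real.sign_of_pos ha, abs_of_pos ha]; ring

/-- The squares `|a_ij| x_j ^ 2` are regrouped by columns through `sum_minorDet_mul_abs`. -/
theorem StronglyConnected.PhiE_eq_two_mul (hsc : StronglyConnected A) (x : Fin n → ℝ) :
    PhiE A x = 2 * ∑ k, minorDet A k * x k * (lapOf A *ᵥ x) k := by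
  have hterm : ∀ k j, minorDet A k * |A k j| * (x k - Real.sign (A k j) * x j) ^ 2 =
      minorDet A k * |A k j| * x k ^ 2 + minorDet A k * |A k j| * x j ^ 2 -
        2 * (minorDet A k * x k * (A k j * x j)) := fun k j => by
    rw [mul_assoc, abs_mul_sub_sign_mul_sq]; ring
  have hrow : ∑ k, ∑ j, minorDet A k * |A k j| * x k ^ 2 =
      ∑ k, minorDet A k * inDeg A k * x k ^ 2 :=
    Finset.sum_congr rfl fun k _ => by rw [inDeg, Finset.mul_sum, Finset.sum_mul]
  have hcol : ∑ k, ∑ j, minorDet A k * |A k j| * x j ^ 2 =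
      ∑ k, minorDet A k * inDeg A k * x k ^ 2 := by
    rw [Finset.sum_comm]
    exact Finset.sum_congr rfl fun j _ => by rw [← Finset.sum_mul, hsc.sum_minorDet_mul_abs]
  have hlap : ∑ k, minorDet A k * x k * (lapOf A *ᵥ x) k =
      ∑ k, minorDet A k * inDeg A k * x k ^ 2 -
        ∑ k, ∑ j, minorDet A k * x k * (A k j * x j) := by
    rw [← Finset.sum_sub_distrib]
    exact Finset.sum_congr rfl fun k _ => by rw [lapOf_mulVec_apply, ← Finset.mul_sum]; ring
  simp only [PhiE, hterm, Finset.sum_add_distrib, Finset.sum_sub_distrib, ← Finset.mul_sum,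
    hrow, hcol, hlap]
  ring

lemma StronglyConnected.PhiE_summand_nonneg (hsc : StronglyConnected A) (x : Fin n → ℝ)
    (i j : Fin n) : 0 ≤ minorDet A i * |A i j| * (x i - Real.sign (A i j) * x j) ^ 2 :=
  mul_nonneg (mul_nonneg (hsc.minorDet_pos i).le (abs_nonneg _)) (sq_nonneg _)

theorem StronglyConnected.PhiE_nonneg (hsc : StronglyConnected A) (x : Fin n → ℝ) :
    0 ≤ PhiE A x :=
  Finset.sum_nonneg fun i _ => Finset.sum_nonneg fun j _ => hsc.PhiE_summand_nonneg x i j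

theorem StronglyConnected.PhiE_eq_zero_iff (hsc : StronglyConnected A) {x : Fin n → ℝ} :
    PhiE A x = 0 ↔ ∀ i j, A i j ≠ 0 → x i = Real.sign (A i j) * x j := by
  have hterm := hsc.PhiE_summand_nonneg x
  simp only [PhiE, Finset.sum_eq_zero_iff_of_nonneg fun i _ => Finset.sum_nonneg fun j _ =>
      hterm i j, Finset.sum_eq_zero_iff_of_nonneg fun _ _ => hterm _ _, mem_univ, true_imp_iff,
    mul_eq_zero, (hsc.minorDet_pos _).ne', abs_eq_zero, pow_eq_zero_iff two_ne_zero, sub_eq_zero,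
    false_or]
  exact forall₂_congr fun i j => or_iff_not_imp_left

theorem isHermitian_mirrorLap (A : Matrix (Fin n) (Fin n) ℝ) : (mirrorLap A).IsHermitian := by
  simp [IsHermitian, mirrorLap, Wmat, conjTranspose_eq_transpose_of_trivial, transpose_mul,
    add_comm]

theorem StronglyConnected.dotProduct_mirrorLap_mulVec_eq (hsc : StronglyConnected A)
    (x : Fin n → ℝ) : x ⬝ᵥ (mirrorLap A *ᵥ x) = PhiE A x / 2 := by
  rw [dotProduct_mirrorLap_mulVec, hsc.PhiE_eq_two_mul]
  ring

theorem StronglyConnected.mirrorLap_posSemidef (hsc : StronglyConnected A) :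
    (mirrorLap A).PosSemidef :=
  posSemidef_iff_dotProduct_mulVec.mpr ⟨isHermitian_mirrorLap A, fun x => by
    rw [star_trivial, hsc.dotProduct_mirrorLap_mulVec_eq]
    exact div_nonneg (hsc.PhiE_nonneg x) zero_le_two⟩

theorem StronglyConnected.mirrorLap_mulVec_eq_zero_iff (hsc : StronglyConnected A)
    {x : Fin n → ℝ} : mirrorLap A *ᵥ x = 0 ↔ PhiE A x = 0 := by
  rw [← hsc.mirrorLap_posSemidef.dotProduct_mulVec_zero_iff, star_trivial,
    hsc.dotProduct_mirrorLap_mulVec_eq, div_eq_zero_iff]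
  simp

section Gauge

variable {σ : Fin n → ℝ}

lemma IsGauge.mul_self (hσ : IsGauge σ) (i : Fin n) : σ i * σ i = 1 := by
  rcases hσ i with h | h <;> simp [h]

lemma IsGauge.sign_eq (hσ : IsGauge σ) {i j : Fin n} (hbal : 0 ≤ σ i * A i j * σ j)
    (h : A i j ≠ 0) : Real.sign (A i j) = σ i * σ j := by
  rcases hσ i with hi | hi <;> rcases hσ j with hj | hj <;> rcases h.lt_or_gt with ha | ha <;>
    simp only [hi, hj] at hbal ⊢ <;> norm_num [Real.sign_of_neg, Real.sign_of_pos, ha] at hbal ⊢ <;>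
    linarith

theorem StronglyConnected.mirrorLap_mulVec_eq_zero_iff_of_gauge (hsc : StronglyConnected A)
    (hσ : IsGauge σ) (hbal : ∀ i j, 0 ≤ σ i * A i j * σ j) {x : Fin n → ℝ} :
    mirrorLap A *ᵥ x = 0 ↔ ∀ i j, σ i * x i = σ j * x j := by
  have hedge : ∀ i j, A i j ≠ 0 → (x i = Real.sign (A i j) * x j ↔ σ i * x i = σ j * x j) := by
    intro i j h
    rw [hσ.sign_eq (hbal i j) h]
    constructor <;> intro e
    · rw [e, ← mul_assoc, ← mul_assoc, hσ.mul_self, one_mul]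
    · rw [← one_mul (x i), ← hσ.mul_self i, mul_assoc, e]
      ring
  rw [hsc.mirrorLap_mulVec_eq_zero_iff, hsc.PhiE_eq_zero_iff]
  refine ⟨fun h i j => ?_, fun h i j hij => (hedge i j hij).2 (h i j)⟩
  exact hsc.forall_of_closed (P := fun l => σ l * x l = σ j * x j)
    (fun k l hkl hk => ((hedge k l hkl).1 (h k l hkl)).symm.trans hk) rfl i

lemma IsGauge.apply_eq_of_mul_eq (hσ : IsGauge σ) {p : Fin n → ℝ}
    (hp : ∀ i j, σ i * p i = σ j * p j) (i : Fin n) : p i = (∑ j, σ j * p j) / n * σ i := by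
  have hn : (n : ℝ) ≠ 0 := Nat.cast_ne_zero.mpr (Fin.pos i).ne'
  rw [Finset.sum_congr rfl fun j _ => (hp i j).symm, Finset.sum_const, card_univ,
    Fintype.card_fin, nsmul_eq_mul, mul_div_cancel_left₀ _ hn, mul_right_comm, hσ.mul_self,
    one_mul]

end Gauge

end Laplacian

theorem mirrorLap_signed_average_consensus_general (n : ℕ)
    (A : Matrix (Fin n) (Fin n) ℝ)
    (hsc : StronglyConnected A) :
    StructBalanced A ↔
      ∃ σ : Fin n → ℝ, IsGauge σ ∧ (∀ i j, 0 ≤ σ i * A i j * σ j) ∧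
        ∀ x₀ : Fin n → ℝ,
          Filter.Tendsto (fun t : ℝ => NormedSpace.exp (-(t • mirrorLap A)) *ᵥ x₀)
            Filter.atTop (nhds (fun i => ((∑ j, σ j * x₀ j) / (n : ℝ)) * σ i)) := by
  refine ⟨fun ⟨σ, hσ, hbal⟩ => ⟨σ, hσ, hbal, fun x₀ => ?_⟩, fun ⟨σ, hσ, hbal, _⟩ => ⟨σ, hσ, hbal⟩⟩
  have hker (x : Fin n → ℝ) := hsc.mirrorLap_mulVec_eq_zero_iff_of_gauge hσ hbal (x := x)
  obtain ⟨p, hp, hproj, hlim⟩ := hsc.mirrorLap_posSemidef.tendsto_exp_neg_smul_mulVec x₀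
  have hσp : σ ⬝ᵥ p = σ ⬝ᵥ x₀ :=
    hproj σ ((hker σ).2 fun i j => by rw [hσ.mul_self, hσ.mul_self])
  convert hlim using 2
  funext i
  rw [hσ.apply_eq_of_mul_eq ((hker p).1 hp) i]
  exact congrArg (· / (n : ℝ) * σ i) hσp.symm

/-- `ẋ = −L̂·x` achieves signed-average consensus iff `G` is structurally
balanced. -/
theorem mirrorLap_signed_average_consensus (n : ℕ) (hn : 2 ≤ n)
    (A : Matrix (Fin n) (Fin n) ℝ)
    (hdiag : ∀ i, A i i = 0) (hdigon : ∀ i j, 0 ≤ A i j * A j i)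
    (hsc : StronglyConnected A) :
    StructBalanced A ↔
      ∃ σ : Fin n → ℝ, IsGauge σ ∧ (∀ i j, 0 ≤ σ i * A i j * σ j) ∧
        ∀ x₀ : Fin n → ℝ,
          Filter.Tendsto (fun t : ℝ => NormedSpace.exp (-(t • mirrorLap A)) *ᵥ x₀)
            Filter.atTop (nhds (fun i => ((∑ j, σ j * x₀ j) / (n : ℝ)) * σ i)) :=
  mirrorLap_signed_average_consensus_general n A hsc
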